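/- Let q be an odd prime. Then Σ_{r=1}^{(q−1)/2} {r²/q} = (q−1)/4 + (1/(2q))·Σ_{n=1}^{q−1} n·(n/q), where {x} denotes the fractional part of x and (n/q) is the Legendre symbol. -/

import Mathlib

/-!
For `1 ≤ r ≤ (q - 1) / 2` we have `{r² / q} = (r² mod q) / q`, and `r ↦ r² mod q` is a
bijection onto the quadratic residues in `[1, q - 1]`, so the left side is `R / q` with `R` the
sum of these residues. Writing `N` for the sum of the non-residues, `∑ n (n / q) = R - N` and
`R + N = q (q - 1) / 2`, which determines `R`.
-/

open Finset

def quadraticResidues (p : ℕ) [Fact p.Prime] : Finset ℕ :=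
  {n ∈ Icc 1 (p - 1) | legendreSym p n = 1}

theorem intCast_natCast_ne_zero_of_lt {p n : ℕ} (h0 : 0 < n) (hn : n < p) :
    ((n : ℤ) : ZMod p) ≠ 0 := by
  rw [Int.cast_natCast, ne_eq, ZMod.natCast_eq_zero_iff]
  exact Nat.not_dvd_of_pos_of_lt h0 hn

theorem sq_mod_injOn_Iic_half (p : ℕ) [hp : Fact p.Prime] :
    Set.InjOn (fun r => r ^ 2 % p) (Set.Iic ((p - 1) / 2)) := by
  have hpos := hp.out.pos
  intro r hr s hs hrs
  simp only [Set.mem_Iic] at hr hs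
  have hsq : (r : ZMod p) ^ 2 = (s : ZMod p) ^ 2 := by
    simpa only [Nat.cast_pow] using (ZMod.natCast_eq_natCast_iff' _ _ p).mpr hrs
  rcases sq_eq_sq_iff_eq_or_eq_neg.mp hsq with h | h
  · simpa only [ZMod.val_natCast_of_lt (show r < p by omega),
      ZMod.val_natCast_of_lt (show s < p by omega)] using congrArg ZMod.val h
  · have hdvd : p ∣ r + s := by
      rw [← ZMod.natCast_eq_zero_iff, Nat.cast_add, h, neg_add_cancel]
    have := Nat.eq_zero_of_dvd_of_lt hdvd (by omega)
    omega

theorem image_sq_mod_Icc_eq_quadraticResidues (p : ℕ) [hp : Fact p.Prime] (hp2 : p ≠ 2) :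
    (Icc 1 ((p - 1) / 2)).image (fun r => r ^ 2 % p) = quadraticResidues p := by
  have hpos := hp.out.pos
  have hodd : p % 2 = 1 := Nat.odd_iff.mp (hp.out.odd_of_ne_two hp2)
  ext n
  simp only [mem_image, mem_Icc, quadraticResidues, mem_filter]
  constructor
  · rintro ⟨r, ⟨hr1, hr⟩, rfl⟩
    have hrp : ¬ p ∣ r := Nat.not_dvd_of_pos_of_lt hr1 (by omega)
    have hres : 0 < r ^ 2 % p :=
      Nat.pos_of_ne_zero fun h => hrp (hp.out.dvd_of_dvd_pow (Nat.dvd_of_mod_eq_zero h))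
    refine ⟨⟨hres, by have := Nat.mod_lt (r ^ 2) hpos; omega⟩, ?_⟩
    rw [show ((r ^ 2 % p : ℕ) : ℤ) = (r : ℤ) ^ 2 % p by push_cast; rfl, ← legendreSym.mod,
      legendreSym.sq_one' p (intCast_natCast_ne_zero_of_lt hr1 (by omega))]
  · rintro ⟨⟨hn1, hn⟩, hleg⟩
    have hn0 := intCast_natCast_ne_zero_of_lt hn1 (show n < p by omega)
    obtain ⟨y, hy⟩ := (legendreSym.eq_one_iff p hn0).mp hleg
    have hy0 : y ≠ 0 := by rintro rfl; exact hn0 (by rw [hy, mul_zero])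
    -- the representative of `±y` in `[0, p / 2]` is a preimage of `n`
    have hsq : ((y.valMinAbs.natAbs : ℕ) : ZMod p) ^ 2 = n := by
      rw [ZMod.natCast_natAbs_valMinAbs, ← Int.cast_natCast, hy]
      split_ifs <;> ring
    refine ⟨y.valMinAbs.natAbs, ⟨?_, ?_⟩, ?_⟩
    · exact Int.natAbs_pos.mpr ((ZMod.valMinAbs_eq_zero y).not.mpr hy0)
    · have := ZMod.natAbs_valMinAbs_le y
      omega
    · have := (ZMod.natCast_eq_natCast_iff' (y.valMinAbs.natAbs ^ 2) n p).mp
        (by push_cast; exact hsq)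
      rwa [Nat.mod_eq_of_lt (show n < p by omega)] at this

theorem sum_mul_legendreSym_eq {R : Type*} [CommRing R] (p : ℕ) [Fact p.Prime] :
    ∑ n ∈ Icc 1 (p - 1), (n : R) * legendreSym p n =
      2 * ∑ n ∈ quadraticResidues p, (n : R) - ∑ n ∈ Icc 1 (p - 1), (n : R) := by
  rw [quadraticResidues, sum_filter, mul_sum, ← sum_sub_distrib]
  refine sum_congr rfl fun n hn => ?_
  rw [mem_Icc] at hn
  rcases legendreSym.eq_one_or_neg_one p (intCast_natCast_ne_zero_of_lt hn.1 (by omega)) with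
    h | h
  · simp [h]; ring
  · simp [h]

theorem sum_Icc_id_mul_two (n : ℕ) : (∑ i ∈ Icc 1 n, i) * 2 = (n + 1) * n := by
  induction n with
  | zero => rfl
  | succ n ih => rw [sum_Icc_succ_top (by omega), add_mul, ih]; ring

/-- For an odd prime `q`, `Σ_{r=1}^{(q−1)/2} {r²/q} = (q−1)/4 + (1/(2q))·Σ_{n=1}^{q−1} n·(n/q)`,
where `{x}` is the fractional part and `(n/q)` the Legendre symbol. -/
theorem sum_fract_sq_eq (q : ℕ) [Fact q.Prime] (hodd : q ≠ 2) :
    ∑ r ∈ Finset.Icc 1 ((q - 1) / 2), Int.fract ((r : ℝ) ^ 2 / q) =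
      ((q : ℝ) - 1) / 4 +
        (1 / (2 * q)) * ∑ n ∈ Finset.Icc 1 (q - 1), (n : ℝ) * (legendreSym q n : ℝ) := by
  have hq1 : 1 ≤ q := (Fact.out : q.Prime).one_le
  have hresidues : ∑ r ∈ Icc 1 ((q - 1) / 2), Int.fract ((r : ℝ) ^ 2 / q) =
      (∑ n ∈ quadraticResidues q, (n : ℝ)) / q := by
    simp_rw [← Nat.cast_pow, Int.fract_div_natCast_eq_div_natCast_mod, ← sum_div,
      ← image_sq_mod_Icc_eq_quadraticResidues q hodd]
    rw [sum_image <| (sq_mod_injOn_Iic_half q).mono <| by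
      rw [coe_Icc]; exact Set.Icc_subset_Iic_self]
  have hgauss : ∑ n ∈ Icc 1 (q - 1), (n : ℝ) = q * (q - 1) / 2 := by
    have := congrArg (Nat.cast : ℕ → ℝ) (sum_Icc_id_mul_two (q - 1))
    push_cast [Nat.cast_sub hq1] at this
    linarith
  rw [hresidues, sum_mul_legendreSym_eq, hgauss]
  field_simp
  ring
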